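/- arXiv:2003.12959 — 2 statements merged into one kernel-verified Lean document; each statement's English description precedes it below -/
import Mathlib

section
/- Let n ≥ 2 and let i_1, …, i_n be integers with each i_j ≥ 2^(2^(n-1)). Then the general position number of the finite grid P_{i_1} □ ⋯ □ P_{i_n} equals 2^(2^(n-1)): every general position set in the box B = {0,…,i_1 − 1} × ⋯ × {0,…,i_n − 1} ⊆ ℤ^n has at most 2^(2^(n-1)) elements, and there exists one with exactly 2^(2^(n-1)) elements. -/
/-- The ℓ1 (graph) distance on the integer lattice ℤ^n, equal to the graph
distance of the grid `P_{i_1} □ ⋯ □ P_{i_n}` on the box. -/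
def d1 {n : ℕ} (u v : Fin n → ℤ) : ℤ := ∑ j, |u j - v j|

namespace GPAux

variable {k : ℕ}

/-- Indexing equivalence for sign vectors. -/
def iE (k : ℕ) : (Fin k → Bool) ≃ Fin (2 ^ k) :=
  (Equiv.arrowCongr (Equiv.refl (Fin k)) finTwoEquiv.symm).trans finFunctionFinEquiv

def idx (e : Fin k → Bool) : ℕ := (iE k e : ℕ)

lemma idx_inj : Function.Injective (idx (k := k)) :=
  fun a b hab => (iE k).injective (Fin.val_injective hab)

lemma idx_lt (e : Fin k → Bool) : idx e < 2 ^ k := (iE k e).isLt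

/-- The sign vector associated to `e`, with first coordinate `+1`. -/
def sg (e : Fin k → Bool) : Fin (k + 1) → ℤ :=
  Fin.cons 1 fun j => if e j then 1 else -1

lemma sg_zero (e : Fin k → Bool) : sg e 0 = 1 := rfl

lemma sg_cases (e : Fin k → Bool) (j : Fin (k + 1)) : sg e j = 1 ∨ sg e j = -1 := by
  induction j using Fin.cases with
  | zero => left; rfl
  | succ j' => cases h : e j' <;> simp [sg, h]

def bitv (b : Bool) : ℤ := if b then 1 else 0

/-- The point of the general position set indexed by `g`. -/
def pt (g : (Fin k → Bool) → Bool) (j : Fin (k + 1)) : ℤ :=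
  ∑ e : Fin k → Bool, 2 ^ idx e * (if sg e j = 1 then bitv (g e) else 1 - bitv (g e))

lemma geo (N : ℕ) : ∑ i ∈ Finset.range N, (2 : ℤ) ^ i = 2 ^ N - 1 := by
  induction N with
  | zero => simp
  | succ N ih => rw [Finset.sum_range_succ, ih]; ring

lemma sum_pow_le (F : Finset (Fin k → Bool)) (M : ℕ) (hF : ∀ e ∈ F, idx e < M) :
    ∑ e ∈ F, (2 : ℤ) ^ idx e ≤ 2 ^ M - 1 := by
  have h1 : ∑ i ∈ F.image idx, (2 : ℤ) ^ i = ∑ e ∈ F, (2 : ℤ) ^ idx e :=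
    Finset.sum_image (fun x _ y _ h => idx_inj h)
  rw [← h1]
  refine le_trans (Finset.sum_le_sum_of_subset_of_nonneg ?_ ?_) (le_of_eq (geo M))
  · intro i hi
    rw [Finset.mem_image] at hi
    obtain ⟨e, he, rfl⟩ := hi
    exact Finset.mem_range.mpr (hF e he)
  · intros; positivity

lemma pt_sub (g h : (Fin k → Bool) → Bool) (j : Fin (k + 1)) :
    pt h j - pt g j = ∑ e : Fin k → Bool, 2 ^ idx e * sg e j * (bitv (h e) - bitv (g e)) := by
  unfold pt
  rw [← Finset.sum_sub_distrib]
  refine Finset.sum_congr rfl fun e _ => ?_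
  rcases sg_cases e j with h1 | h1
  · rw [h1, if_pos rfl, if_pos rfl]; ring
  · rw [h1, if_neg (by norm_num), if_neg (by norm_num)]; ring

/-- Key lemma: if `pt g ≤ pt h` in the partial order with signs `sg est`, then
`g est = false` and `h est = true`. -/
lemma main (g h : (Fin k → Bool) → Bool) (est : Fin k → Bool) (hgh : g ≠ h)
    (hle : ∀ j, 0 ≤ sg est j * (pt h j - pt g j)) :
    g est = false ∧ h est = true := by
  have hne : (Finset.univ.filter fun e : Fin k → Bool =>
      bitv (h e) - bitv (g e) ≠ 0).Nonempty := by
    obtain ⟨e0, he0⟩ := Function.ne_iff.mp hgh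
    refine ⟨e0, Finset.mem_filter.mpr ⟨Finset.mem_univ _, ?_⟩⟩
    cases hg : g e0 <;> cases hh : h e0 <;> simp_all [bitv]
  obtain ⟨eh, hehF, hmax⟩ := Finset.exists_max_image _ idx hne
  have hdeh : bitv (h eh) - bitv (g eh) ≠ 0 := (Finset.mem_filter.mp hehF).2
  have hp : (0 : ℤ) < 2 ^ idx eh := by positivity
  have key : ∀ j, (sg est j * sg eh j) * (bitv (h eh) - bitv (g eh)) = 1 := by
    intro j
    have hsum : 0 ≤ ∑ e : Fin k → Bool,
        2 ^ idx e * (sg est j * sg e j) * (bitv (h e) - bitv (g e)) := by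
      have h1 := hle j
      rw [pt_sub, Finset.mul_sum] at h1
      exact h1.trans_eq (Finset.sum_congr rfl fun e _ => by ring)
    have hsplit : 2 ^ idx eh * (sg est j * sg eh j) * (bitv (h eh) - bitv (g eh)) +
        ∑ e ∈ Finset.univ.erase eh,
          2 ^ idx e * (sg est j * sg e j) * (bitv (h e) - bitv (g e)) =
        ∑ e : Fin k → Bool, 2 ^ idx e * (sg est j * sg e j) * (bitv (h e) - bitv (g e)) :=
      Finset.add_sum_erase Finset.univ
        (fun e : Fin k → Bool => 2 ^ idx e * (sg est j * sg e j) * (bitv (h e) - bitv (g e)))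
        (Finset.mem_univ eh)
    have hrest : |∑ e ∈ Finset.univ.erase eh,
        2 ^ idx e * (sg est j * sg e j) * (bitv (h e) - bitv (g e))| ≤ 2 ^ idx eh - 1 := by
      refine le_trans (Finset.abs_sum_le_sum_abs _ _) ?_
      rw [← Finset.sum_filter_of_ne (p := fun e => bitv (h e) - bitv (g e) ≠ 0)
        (fun e _ hne0 => by
          intro h0
          exact hne0 (by rw [h0, mul_zero, abs_zero]))]
      refine le_trans (Finset.sum_le_sum (g := fun e => (2 : ℤ) ^ idx e) ?_) ?_
      · intro e he
        rw [Finset.mem_filter] at he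
        have hsg : |sg est j * sg e j| = 1 := by
          rcases sg_cases est j with hs | hs <;> rcases sg_cases e j with hs' | hs' <;>
            rw [hs, hs'] <;> norm_num
        have hd : |bitv (h e) - bitv (g e)| ≤ 1 := by
          cases h e <;> cases g e <;> simp [bitv]
        have h2 : |(2 : ℤ) ^ idx e| = 2 ^ idx e := abs_of_nonneg (by positivity)
        rw [abs_mul, abs_mul, h2, hsg, mul_one]
        nlinarith [pow_pos (show (0:ℤ) < 2 by norm_num) (idx e)]
      · refine sum_pow_le _ _ ?_
        intro e he
        rw [Finset.mem_filter, Finset.mem_erase] at he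
        have hle' : idx e ≤ idx eh :=
          hmax e (Finset.mem_filter.mpr ⟨Finset.mem_univ _, he.2⟩)
        exact lt_of_le_of_ne hle' fun hq => he.1.1 (idx_inj hq)
    have habs := abs_le.mp hrest
    have hs1 : sg est j * sg eh j = 1 ∨ sg est j * sg eh j = -1 := by
      rcases sg_cases est j with hs | hs <;> rcases sg_cases eh j with hs' | hs' <;>
        rw [hs, hs'] <;> norm_num
    have hd1 : bitv (h eh) - bitv (g eh) = 1 ∨ bitv (h eh) - bitv (g eh) = -1 := by
      cases hg : g eh <;> cases hh : h eh <;> simp_all [bitv]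
    rcases hs1 with hs | hs <;> rcases hd1 with hd | hd <;> rw [hs, hd] <;> rw [hs, hd] at hsplit
    · norm_num
    · exfalso; rw [← hsplit] at hsum; nlinarith
    · exfalso; rw [← hsplit] at hsum; nlinarith
    · norm_num
  have hd1 : bitv (h eh) - bitv (g eh) = 1 := by
    have h0 := key 0
    rw [sg_zero, sg_zero] at h0
    linarith [h0]
  have hee : est = eh := by
    by_contra hne'
    obtain ⟨j0, hj0⟩ := Function.ne_iff.mp hne'
    have hkey := key j0.succ
    rw [hd1, mul_one] at hkey
    cases h1 : est j0 <;> cases h2 : eh j0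
    · exact hj0 (h1.trans h2.symm)
    · rw [show sg est j0.succ = -1 by simp [sg, h1],
        show sg eh j0.succ = 1 by simp [sg, h2]] at hkey
      norm_num at hkey
    · rw [show sg est j0.succ = 1 by simp [sg, h1],
        show sg eh j0.succ = -1 by simp [sg, h2]] at hkey
      norm_num at hkey
    · exact hj0 (h1.trans h2.symm)
  rw [← hee] at hd1
  cases hg : g est <;> cases hh : h est <;> simp_all [bitv]

lemma pt_inj : Function.Injective (pt (k := k)) := by
  intro g h hgh
  by_contra hne
  have h1 := main g h (fun _ => false) hne (fun j => by rw [hgh]; simp)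
  have h2 := main h g (fun _ => false) (Ne.symm hne) (fun j => by rw [hgh]; simp)
  rw [h1.2] at h2
  exact absurd h2.1 (by simp)

/-- No point of the family is strictly ℓ1-between two others. -/
lemma mid (g1 g2 g3 : (Fin k → Bool) → Bool) (h12 : g1 ≠ g2) (h23 : g2 ≠ g3)
    (hb : ∀ j, (pt g1 j ≤ pt g2 j ∧ pt g2 j ≤ pt g3 j) ∨
      (pt g3 j ≤ pt g2 j ∧ pt g2 j ≤ pt g1 j))
    (h0 : pt g1 0 ≤ pt g3 0) : False := by
  set est : Fin k → Bool := fun j => decide (pt g1 j.succ ≤ pt g3 j.succ) with hest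
  have hsg : ∀ j' : Fin k, (pt g1 j'.succ ≤ pt g3 j'.succ → sg est j'.succ = 1) ∧
      (¬ pt g1 j'.succ ≤ pt g3 j'.succ → sg est j'.succ = -1) := by
    intro j'
    constructor <;> intro hc <;> simp [sg, hest, hc]
  have hle1 : ∀ j, 0 ≤ sg est j * (pt g2 j - pt g1 j) := by
    intro j
    induction j using Fin.cases with
    | zero =>
      rw [sg_zero, one_mul]
      rcases hb 0 with ⟨ha, hb'⟩ | ⟨ha, hb'⟩ <;> linarith
    | succ j' =>
      by_cases hc : pt g1 j'.succ ≤ pt g3 j'.succ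
      · rw [(hsg j').1 hc, one_mul]
        rcases hb j'.succ with ⟨ha, hb'⟩ | ⟨ha, hb'⟩ <;> linarith
      · rw [(hsg j').2 hc]
        rcases hb j'.succ with ⟨ha, hb'⟩ | ⟨ha, hb'⟩ <;> nlinarith
  have hle2 : ∀ j, 0 ≤ sg est j * (pt g3 j - pt g2 j) := by
    intro j
    induction j using Fin.cases with
    | zero =>
      rw [sg_zero, one_mul]
      rcases hb 0 with ⟨ha, hb'⟩ | ⟨ha, hb'⟩ <;> linarith
    | succ j' =>
      by_cases hc : pt g1 j'.succ ≤ pt g3 j'.succ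
      · rw [(hsg j').1 hc, one_mul]
        rcases hb j'.succ with ⟨ha, hb'⟩ | ⟨ha, hb'⟩ <;> linarith
      · rw [(hsg j').2 hc]
        rcases hb j'.succ with ⟨ha, hb'⟩ | ⟨ha, hb'⟩ <;> nlinarith
  have A := main g1 g2 est h12 hle1
  have B := main g2 g3 est h23 hle2
  rw [A.2] at B
  exact absurd B.1 (by simp)

lemma between (a b c : ℤ) (h : |a - c| = |a - b| + |b - c|) :
    (a ≤ b ∧ b ≤ c) ∨ (c ≤ b ∧ b ≤ a) := by
  rcases abs_cases (a - c) with ⟨h1, h1'⟩ | ⟨h1, h1'⟩ <;>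
    rcases abs_cases (a - b) with ⟨h2, h2'⟩ | ⟨h2, h2'⟩ <;>
    rcases abs_cases (b - c) with ⟨h3, h3'⟩ | ⟨h3, h3'⟩ <;> omega

lemma gp_range : ∀ u ∈ Set.range (pt (k := k)), ∀ v ∈ Set.range (pt (k := k)),
    ∀ w ∈ Set.range (pt (k := k)), u ≠ v → u ≠ w → v ≠ w →
    d1 u w ≠ d1 u v + d1 v w := by
  rintro u ⟨g1, rfl⟩ v ⟨g2, rfl⟩ w ⟨g3, rfl⟩ h12 h13 h23 heq
  have hg12 : g1 ≠ g2 := fun h => h12 (congrArg pt h)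
  have hg23 : g2 ≠ g3 := fun h => h23 (congrArg pt h)
  simp only [d1] at heq
  rw [← Finset.sum_add_distrib] at heq
  have hco : ∀ j : Fin (k + 1), |pt g1 j - pt g3 j| =
      |pt g1 j - pt g2 j| + |pt g2 j - pt g3 j| := fun j =>
    (Finset.sum_eq_sum_iff_of_le fun i _ => abs_sub_le _ _ _).mp heq j (Finset.mem_univ j)
  have hb : ∀ j, (pt g1 j ≤ pt g2 j ∧ pt g2 j ≤ pt g3 j) ∨
      (pt g3 j ≤ pt g2 j ∧ pt g2 j ≤ pt g1 j) := fun j => between _ _ _ (hco j)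
  rcases le_total (pt g1 0) (pt g3 0) with h0 | h0
  · exact mid g1 g2 g3 hg12 hg23 hb h0
  · exact mid g3 g2 g1 hg23.symm hg12.symm (fun j => (hb j).symm) h0

lemma sum_all : ∑ e : Fin k → Bool, (2 : ℤ) ^ idx e = 2 ^ 2 ^ k - 1 := by
  rw [← geo, ← Fin.sum_univ_eq_sum_range (fun i => (2 : ℤ) ^ i) (2 ^ k)]
  exact Fintype.sum_equiv (iE k) _ _ fun e => rfl

lemma pt_nonneg (g : (Fin k → Bool) → Bool) (j : Fin (k + 1)) : 0 ≤ pt g j := by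
  refine Finset.sum_nonneg fun e _ => mul_nonneg (by positivity) ?_
  split <;> cases g e <;> simp [bitv]

lemma pt_le (g : (Fin k → Bool) → Bool) (j : Fin (k + 1)) : pt g j ≤ 2 ^ 2 ^ k - 1 := by
  rw [← sum_all]
  refine Finset.sum_le_sum fun e _ => ?_
  have h1 : (if sg e j = 1 then bitv (g e) else 1 - bitv (g e)) ≤ 1 := by
    split <;> cases g e <;> simp [bitv]
  nlinarith [pow_pos (show (0:ℤ) < 2 by norm_num) (idx e),
    pow_nonneg (show (0:ℤ) ≤ 2 by norm_num) (idx e)]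

lemma upper (S : Set (Fin (k + 1) → ℤ))
    (hS : ∀ u ∈ S, ∀ v ∈ S, ∀ w ∈ S, u ≠ v → u ≠ w → v ≠ w →
      d1 u w ≠ d1 u v + d1 v w) :
    S.encard ≤ 2 ^ 2 ^ k := by
  classical
  set f : (Fin (k + 1) → ℤ) → ((Fin k → Bool) → Bool) := fun u e =>
    decide (∃ v, v ∈ S ∧ v ≠ u ∧ ∀ j, 0 ≤ sg e j * (u j - v j)) with hf
  have hcore : ∀ a ∈ S, ∀ b ∈ S, a ≠ b → ∀ e : Fin k → Bool,
      (∀ j, 0 ≤ sg e j * (b j - a j)) → f a ≠ f b := by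
    intro a ha b hb hab e hle hfeq
    have hfb : f b e = true := decide_eq_true ⟨a, ha, hab, hle⟩
    have hfa : f a e = true := by rw [hfeq]; exact hfb
    obtain ⟨w, hwS, hwa, hwle⟩ := of_decide_eq_true hfa
    have hwb : w ≠ b := by
      rintro rfl
      refine hab (funext fun j => ?_)
      have h1 := hle j
      have h2 := hwle j
      rcases sg_cases e j with hs | hs <;> rw [hs] at h1 h2 <;> nlinarith
    have hco : d1 w b = d1 w a + d1 a b := by
      simp only [d1]
      rw [← Finset.sum_add_distrib]
      refine Finset.sum_congr rfl fun j _ => ?_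
      have h1 := hle j
      have h2 := hwle j
      rcases sg_cases e j with hs | hs <;> rw [hs] at h1 h2 <;>
        rcases abs_cases (w j - b j) with ⟨u1, u1'⟩ | ⟨u1, u1'⟩ <;>
        rcases abs_cases (w j - a j) with ⟨u2, u2'⟩ | ⟨u2, u2'⟩ <;>
        rcases abs_cases (a j - b j) with ⟨u3, u3'⟩ | ⟨u3, u3'⟩ <;> nlinarith
    exact hS w hwS a ha b hb hwa hwb hab hco
  have hinj : Set.InjOn f S := by
    intro a ha b hb hfeq
    by_contra hab
    rcases le_total (a 0) (b 0) with h0 | h0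
    · refine hcore a ha b hb hab (fun j' => decide (a j'.succ ≤ b j'.succ)) ?_ hfeq
      intro j
      induction j using Fin.cases with
      | zero => rw [sg_zero, one_mul]; linarith
      | succ j' =>
        by_cases hc : a j'.succ ≤ b j'.succ
        · rw [show sg (fun j'' => decide (a j''.succ ≤ b j''.succ)) j'.succ = 1 by
            simp [sg, hc], one_mul]
          linarith
        · rw [show sg (fun j'' => decide (a j''.succ ≤ b j''.succ)) j'.succ = -1 by
            simp [sg, hc]]
          push_neg at hc
          nlinarith
    · refine hcore b hb a ha (Ne.symm hab) (fun j' => decide (b j'.succ ≤ a j'.succ)) ?_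
        hfeq.symm
      intro j
      induction j using Fin.cases with
      | zero => rw [sg_zero, one_mul]; linarith
      | succ j' =>
        by_cases hc : b j'.succ ≤ a j'.succ
        · rw [show sg (fun j'' => decide (b j''.succ ≤ a j''.succ)) j'.succ = 1 by
            simp [sg, hc], one_mul]
          linarith
        · rw [show sg (fun j'' => decide (b j''.succ ≤ a j''.succ)) j'.succ = -1 by
            simp [sg, hc]]
          push_neg at hc
          nlinarith
  calc S.encard = (f '' S).encard := (hinj.encard_image).symm
    _ ≤ (Set.univ : Set ((Fin k → Bool) → Bool)).encard :=
        Set.encard_mono (Set.subset_univ _)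
    _ = 2 ^ 2 ^ k := by
        rw [Set.encard_univ, ENat.card_eq_coe_fintype_card, Fintype.card_fun,
          Fintype.card_fun, Fintype.card_bool, Fintype.card_fin]
        push_cast
        rfl

end GPAux

/-- The general position number of the finite grid `P_{i_1} □ ⋯ □ P_{i_n}`,
with all `i_j ≥ 2^(2^(n-1))` and `n ≥ 2`, equals `2^(2^(n-1))`: every general
position set in the box `B = {0,…,i_1−1} × ⋯ × {0,…,i_n−1}` has at most
`2^(2^(n-1))` elements and there is one with exactly that many elements. -/
theorem gp_number_of_finite_grids (n : ℕ) (hn : 2 ≤ n) (i : Fin n → ℤ)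
    (hi : ∀ j, 2 ^ 2 ^ (n - 1) ≤ i j)
    (B : Set (Fin n → ℤ)) (hB : B = {u | ∀ j, 0 ≤ u j ∧ u j ≤ i j - 1}) :
    (∀ S ⊆ B,
      (∀ u ∈ S, ∀ v ∈ S, ∀ w ∈ S, u ≠ v → u ≠ w → v ≠ w →
        d1 u w ≠ d1 u v + d1 v w) →
      S.encard ≤ 2 ^ 2 ^ (n - 1)) ∧
    (∃ S ⊆ B,
      (∀ u ∈ S, ∀ v ∈ S, ∀ w ∈ S, u ≠ v → u ≠ w → v ≠ w →
        d1 u w ≠ d1 u v + d1 v w) ∧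
      S.encard = 2 ^ 2 ^ (n - 1)) := by
  obtain ⟨k, rfl⟩ : ∃ k, n = k + 1 := ⟨n - 1, by omega⟩
  have hk1 : k + 1 - 1 = k := rfl
  subst hB
  constructor
  · intro S hSB hS
    have h := GPAux.upper S hS
    simpa [hk1] using h
  · refine ⟨Set.range GPAux.pt, ?_, GPAux.gp_range, ?_⟩
    · rintro u ⟨g, rfl⟩ j
      refine ⟨GPAux.pt_nonneg g j, ?_⟩
      have h1 := GPAux.pt_le g j
      have h2 := hi j
      rw [hk1] at h2
      linarith
    · have hcard : (Set.range (GPAux.pt (k := k))).encard = 2 ^ 2 ^ k := by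
        rw [← Set.image_univ, Set.InjOn.encard_image (GPAux.pt_inj.injOn),
          Set.encard_univ, ENat.card_eq_coe_fintype_card, Fintype.card_fun,
          Fintype.card_fun, Fintype.card_bool, Fintype.card_fin]
        push_cast
        rfl
      exact hcard
end

section
/- Let n ≥ 2, let i_1, …, i_n be integers with each i_j ≥ 2^(2^(n-1)), let B = {0,…,i_1 − 1} × ⋯ × {0,…,i_n − 1} ⊆ ℤ^n, and let G be a connected graph admitting a map f : B → V(G) such that d_G(f(u), f(v)) = d₁(u,v) for all u, v ∈ B (i.e., G contains an isometric copy of the grid P_{i_1} □ ⋯ □ P_{i_n}). Then G has a general position set of cardinality 2^(2^(n-1)); in particular gp(G) ≥ 2^(2^(n-1)). -/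
open Finset

theorem Int.abs_sub_lt_abs_sub_add_abs_sub_of_not_between {x y z : ℤ} (hxy : x ≠ y) (hyz : y ≠ z)
    (h : ¬(x < y ↔ y < z)) : |x - z| < |x - y| + |y - z| := by
  rcases abs_cases (x - z) with ⟨_, _⟩ | ⟨_, _⟩ <;>
  rcases abs_cases (x - y) with ⟨_, _⟩ | ⟨_, _⟩ <;>
  rcases abs_cases (y - z) with ⟨_, _⟩ | ⟨_, _⟩ <;> omega

section d1

variable {n : ℕ} {u v w : Fin n → ℤ}

theorem d1_eq_zero_iff : d1 u v = 0 ↔ u = v := by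
  rw [d1, Fintype.sum_eq_zero_iff_of_nonneg fun j ↦ abs_nonneg (u j - v j)]
  simp only [funext_iff, Pi.zero_apply, abs_eq_zero, sub_eq_zero]

theorem d1_lt_d1_add_d1_of_abs_lt (j : Fin n)
    (h : |u j - w j| < |u j - v j| + |v j - w j|) : d1 u w < d1 u v + d1 v w := by
  rw [d1, d1, d1, ← sum_add_distrib]
  exact sum_lt_sum (fun _ _ ↦ abs_sub_le _ _ _) ⟨j, mem_univ j, h⟩

end d1

namespace Nat

theorem testBit_sum_two_pow (s : Finset ℕ) (i : ℕ) :
    (∑ j ∈ s, 2 ^ j).testBit i = decide (i ∈ s) := by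
  rw [Bool.eq_iff_iff, decide_eq_true_iff, ← mem_bitIndices, ← List.mem_toFinset,
    Finset.toFinset_bitIndices_sum_two_pow]

theorem lt_iff_testBit_log2_xor {a b : ℕ} (h : a ≠ b) :
    a < b ↔ b.testBit (a ^^^ b).log2 := by
  have hne : a ^^^ b ≠ 0 := by simpa using h
  have hdiff := testBit_log2 hne
  have habove : ∀ j, (a ^^^ b).log2 < j → a.testBit j = b.testBit j := fun j hj ↦ by
    simpa [testBit_xor] using testBit_lt_two_pow (lt_of_lt_of_le lt_log2_self
      (Nat.pow_le_pow_right two_pos hj))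
  rw [testBit_xor] at hdiff
  cases hb : b.testBit (a ^^^ b).log2
  · simp only [Bool.false_eq_true, iff_false, not_lt]
    exact (lt_of_testBit _ hb (by simpa [hb] using hdiff) fun j hj ↦ (habove j hj).symm).le
  · simp only [iff_true]
    exact lt_of_testBit _ (by simpa [hb] using hdiff) hb habove

theorem xor_lt_xor_iff {a b : ℕ} (M : ℕ) (h : a ≠ b) :
    a ^^^ M < b ^^^ M ↔ (a < b ↔ M.testBit (a ^^^ b).log2 = false) := by
  have hM : a ^^^ M ^^^ (b ^^^ M) = a ^^^ b := by
    rw [xor_comm b M, ← xor_assoc, xor_cancel_right]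
  rw [lt_iff_testBit_log2_xor ((xor_left_involutive M).injective.ne h), hM,
    lt_iff_testBit_log2_xor h, testBit_xor]
  cases b.testBit (a ^^^ b).log2 <;> cases M.testBit (a ^^^ b).log2 <;> simp

end Nat

def coordMask (m : ℕ) : ℕ → ℕ
  | 0 => 0
  | t + 1 => ∑ p ∈ (range (2 ^ m)).filter (fun p ↦ p.testBit t = false), 2 ^ p

theorem coordMask_lt_two_pow (m j : ℕ) : coordMask m j < 2 ^ 2 ^ m := by
  cases j with
  | zero => exact Nat.two_pow_pos _
  | succ t => exact Nat.geomSum_lt le_rfl fun p hp ↦ mem_range.1 (mem_filter.1 hp).1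

theorem testBit_coordMask_succ {m t p : ℕ} (hp : p < 2 ^ m) :
    (coordMask m (t + 1)).testBit p = !p.testBit t := by
  simp [coordMask, Nat.testBit_sum_two_pow, hp]

theorem exists_not_between_xor_coordMask {m a b c : ℕ} (ha : a < 2 ^ 2 ^ m)
    (hb : b < 2 ^ 2 ^ m) (hc : c < 2 ^ 2 ^ m) (hab : a ≠ b) (hbc : b ≠ c) :
    ∃ j ≤ m, ¬(a ^^^ coordMask m j < b ^^^ coordMask m j ↔
      b ^^^ coordMask m j < c ^^^ coordMask m j) := by
  by_cases hmono : a < b ↔ b < c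
  swap
  · exact ⟨0, m.zero_le, by simpa [coordMask] using hmono⟩
  set p := (a ^^^ b).log2
  set q := (b ^^^ c).log2
  have hbp : a < b ↔ b.testBit p := Nat.lt_iff_testBit_log2_xor hab
  have hbq : b < c ↔ ¬b.testBit q := by
    rw [show b < c ↔ ¬c < b by omega, Nat.lt_iff_testBit_log2_xor hbc.symm, Nat.xor_comm]
  have hpq : p ≠ q := fun h ↦ by rw [h] at hbp; tauto
  have hp : p < 2 ^ m := (Nat.log2_lt (by simpa using hab)).2 (Nat.xor_lt_two_pow ha hb)
  have hq : q < 2 ^ m := (Nat.log2_lt (by simpa using hbc)).2 (Nat.xor_lt_two_pow hb hc)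
  set t := (p ^^^ q).log2
  have ht : t < m := (Nat.log2_lt (by simpa using hpq)).2 (Nat.xor_lt_two_pow hp hq)
  have hpqt : p.testBit t ≠ q.testBit t := by
    simpa [Nat.testBit_xor] using Nat.testBit_log2 (n := p ^^^ q) (by simpa using hpq)
  refine ⟨t + 1, ht, ?_⟩
  rw [Nat.xor_lt_xor_iff _ hab, Nat.xor_lt_xor_iff _ hbc, testBit_coordMask_succ hp,
    testBit_coordMask_succ hq, hmono]
  grind

def gridPoint (n m k : ℕ) : Fin n → ℤ := fun j ↦ ((k ^^^ coordMask m j : ℕ) : ℤ)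

theorem gridPoint_injective {n : ℕ} (hn : 0 < n) (m : ℕ) : Function.Injective (gridPoint n m) :=
  fun a b h ↦ by simpa [gridPoint, coordMask] using congrFun h ⟨0, hn⟩

theorem gridPoint_nonneg (n m k : ℕ) (j : Fin n) : 0 ≤ gridPoint n m k j := Int.natCast_nonneg _

theorem gridPoint_lt {n m k : ℕ} (hk : k < 2 ^ 2 ^ m) (j : Fin n) :
    gridPoint n m k j < 2 ^ 2 ^ m := by
  unfold gridPoint
  exact_mod_cast Nat.xor_lt_two_pow hk (coordMask_lt_two_pow m j)

theorem d1_gridPoint_lt_add {n m a b c : ℕ} (hmn : m < n) (ha : a < 2 ^ 2 ^ m)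
    (hb : b < 2 ^ 2 ^ m) (hc : c < 2 ^ 2 ^ m) (hab : a ≠ b) (hbc : b ≠ c) :
    d1 (gridPoint n m a) (gridPoint n m c) <
      d1 (gridPoint n m a) (gridPoint n m b) + d1 (gridPoint n m b) (gridPoint n m c) := by
  obtain ⟨j, hjm, hj⟩ := exists_not_between_xor_coordMask ha hb hc hab hbc
  have hxor_ne {x y : ℕ} (h : x ≠ y) : x ^^^ coordMask m j ≠ y ^^^ coordMask m j :=
    (xor_left_involutive _).injective.ne h
  refine d1_lt_d1_add_d1_of_abs_lt ⟨j, by omega⟩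
    (Int.abs_sub_lt_abs_sub_add_abs_sub_of_not_between ?_ ?_ ?_) <;>
    simp only [gridPoint, ne_eq, Nat.cast_inj, Nat.cast_lt]
  exacts [hxor_ne hab, hxor_ne hbc, hj]

theorem dist_ne_dist_add_dist_of_d1_lt {n : ℕ} {V : Type*} {G : SimpleGraph V}
    {f : (Fin n → ℤ) → V} {B : Set (Fin n → ℤ)}
    (hf : ∀ u ∈ B, ∀ v ∈ B, (G.dist (f u) (f v) : ℤ) = d1 u v) {u v w : Fin n → ℤ}
    (hu : u ∈ B) (hv : v ∈ B) (hw : w ∈ B) (h : d1 u w < d1 u v + d1 v w) :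
    G.dist (f u) (f w) ≠ G.dist (f u) (f v) + G.dist (f v) (f w) := by
  intro heq
  have := congrArg (Nat.cast : ℕ → ℤ) heq
  push_cast at this
  rw [hf u hu w hw, hf u hu v hv, hf v hv w hw] at this
  omega

theorem injOn_of_d1_isometry {n : ℕ} {V : Type*} {G : SimpleGraph V}
    {f : (Fin n → ℤ) → V} {B : Set (Fin n → ℤ)}
    (hf : ∀ u ∈ B, ∀ v ∈ B, (G.dist (f u) (f v) : ℤ) = d1 u v) : Set.InjOn f B :=
  fun u hu v hv h ↦ d1_eq_zero_iff.1 <| by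
    rw [← hf u hu v hv, h, SimpleGraph.dist_self, Nat.cast_zero]

theorem gp_lower_bound_of_isometric_grid_general (n : ℕ) (hn : 2 ≤ n) (i : Fin n → ℤ)
    (hi : ∀ j, 2 ^ 2 ^ (n - 1) ≤ i j)
    (B : Set (Fin n → ℤ)) (hB : B = {u | ∀ j, 0 ≤ u j ∧ u j ≤ i j - 1})
    {V : Type*} (G : SimpleGraph V)
    (f : (Fin n → ℤ) → V)
    (hf : ∀ u ∈ B, ∀ v ∈ B, (G.dist (f u) (f v) : ℤ) = d1 u v) :
    ∃ S : Set V,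
      S.encard = 2 ^ 2 ^ (n - 1) ∧
      ∀ u ∈ S, ∀ v ∈ S, ∀ w ∈ S, u ≠ v → u ≠ w → v ≠ w →
        G.dist u w ≠ G.dist u v + G.dist v w := by
  set m := n - 1
  have hmn : m < n := by omega
  have hmem : ∀ k < 2 ^ 2 ^ m, gridPoint n m k ∈ B := fun k hk ↦ by
    rw [hB]
    exact fun j ↦ ⟨gridPoint_nonneg n m k j, by linarith [gridPoint_lt (n := n) hk j, hi j]⟩
  have hinj : Set.InjOn (f ∘ gridPoint n m) (Set.Iio (2 ^ 2 ^ m)) :=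
    (injOn_of_d1_isometry hf).comp (gridPoint_injective (by omega) m).injOn hmem
  refine ⟨(f ∘ gridPoint n m) '' Set.Iio (2 ^ 2 ^ m), ?_, ?_⟩
  · rw [hinj.encard_image, ← Finset.coe_range, Set.encard_coe_eq_coe_finsetCard, card_range]
    norm_cast
  · rintro _ ⟨a, ha, rfl⟩ _ ⟨b, hb, rfl⟩ _ ⟨c, hc, rfl⟩ hab - hbc
    exact dist_ne_dist_add_dist_of_d1_lt hf (hmem a ha) (hmem b hb) (hmem c hc)
      (d1_gridPoint_lt_add hmn ha hb hc (ne_of_apply_ne _ hab) (ne_of_apply_ne _ hbc))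

/-- If a connected graph `G` contains an isometric copy of a grid
`P_{i_1} □ ⋯ □ P_{i_n}` with `n ≥ 2` and all `i_j ≥ 2^(2^(n-1))`, then `G`
has a general position set of cardinality `2^(2^(n-1))`; in particular
`gp(G) ≥ 2^(2^(n-1))`. -/
theorem gp_lower_bound_of_isometric_grid (n : ℕ) (hn : 2 ≤ n) (i : Fin n → ℤ)
    (hi : ∀ j, 2 ^ 2 ^ (n - 1) ≤ i j)
    (B : Set (Fin n → ℤ)) (hB : B = {u | ∀ j, 0 ≤ u j ∧ u j ≤ i j - 1})
    {V : Type*} (G : SimpleGraph V) (hG : G.Connected)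
    (f : (Fin n → ℤ) → V)
    (hf : ∀ u ∈ B, ∀ v ∈ B, (G.dist (f u) (f v) : ℤ) = d1 u v) :
    ∃ S : Set V,
      S.encard = 2 ^ 2 ^ (n - 1) ∧
      ∀ u ∈ S, ∀ v ∈ S, ∀ w ∈ S, u ≠ v → u ≠ w → v ≠ w →
        G.dist u w ≠ G.dist u v + G.dist v w :=
  gp_lower_bound_of_isometric_grid_general n hn i hi B hB G f hf
end
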